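/- arXiv:math/0203103 — 6 statements merged into one kernel-verified Lean document; each statement's English description precedes it below -/
import Mathlib

section
/- Let φ : ℝ² → ℝ be continuous with compact support contained in the open set {(x,y) ∈ ℝ² : 0 < x and y < 0}. Define F : ℝ → ℝ by F(a) = ∫_{ℝ²} φ(x,y) · e^a/(e^a·x − y)² d(x,y). Then F is differentiable at a = 0 with F'(0) = ∫_{ℝ²} φ(x,y) · (−(x+y))/(x−y)³ d(x,y). -/
open MeasureTheory Real

/-! Differentiate under the integral sign. On the compact set `tsupport φ ⊆ {x > 0, y < 0}` the
denominator `e^a x - y` stays positive, so the `a`-derivative of the kernel is jointly continuous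
there and hence bounded for `a` near `0`; `|φ|` times this bound dominates the derivative of the
integrand. At `a = 0` the derivative of `e^a / (e^a x - y)²` is `-(x + y) / (x - y)³`. -/

open Function

section ParametricIntegral

variable {X : Type*} [TopologicalSpace X] {φ : X → ℝ}

theorem continuous_mul_of_continuousAt_uncurry (hφ : Continuous φ) {k : ℝ → X → ℝ}
    (hk : ∀ a, ∀ p ∈ tsupport φ, ContinuousAt (uncurry k) (a, p)) (a : ℝ) :
    Continuous fun p => φ p * k a p :=
  continuous_of_tsupport fun p hp =>
    hφ.continuousAt.mul <|
      (hk a p (tsupport_mul_subset_left hp)).comp (Continuous.prodMk_right a).continuousAt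

theorem hasDerivAt_integral_mul_of_hasCompactSupport [MeasurableSpace X] [OpensMeasurableSpace X]
    {μ : Measure X} [IsFiniteMeasureOnCompacts μ]
    (hφ : Continuous φ) (hφc : HasCompactSupport φ) {k k' : ℝ → X → ℝ}
    (hk : ∀ a, ∀ p ∈ tsupport φ, ContinuousAt (uncurry k) (a, p))
    (hk' : ∀ a, ∀ p ∈ tsupport φ, ContinuousAt (uncurry k') (a, p))
    (hderiv : ∀ a, ∀ p ∈ tsupport φ, HasDerivAt (k · p) (k' a p) a) (a₀ : ℝ) :
    HasDerivAt (fun a => ∫ p, φ p * k a p ∂μ) (∫ p, φ p * k' a₀ p ∂μ) a₀ := by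
  obtain ⟨C, hC⟩ := ((isCompact_closedBall a₀ 1).prod hφc).exists_bound_of_continuousOn
    fun q hq => (hk' q.1 q.2 hq.2).continuousWithinAt
  have h_bound : ∀ p, ∀ a ∈ Metric.closedBall a₀ 1, ‖φ p * k' a p‖ ≤ ‖φ p‖ * C := by
    intro p a ha
    by_cases hp : p ∈ tsupport φ
    · rw [norm_mul]
      exact mul_le_mul_of_nonneg_left (hC (a, p) ⟨ha, hp⟩) (norm_nonneg _)
    · simp [image_eq_zero_of_notMem_tsupport hp]
  have h_diff : ∀ p, ∀ a, HasDerivAt (fun a => φ p * k a p) (φ p * k' a p) a := by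
    intro p a
    by_cases hp : p ∈ tsupport φ
    · exact (hderiv a p hp).const_mul (φ p)
    · simpa [image_eq_zero_of_notMem_tsupport hp] using hasDerivAt_const a (0 : ℝ)
  exact (hasDerivAt_integral_of_dominated_loc_of_deriv_le (Metric.closedBall_mem_nhds a₀ one_pos)
    (.of_forall fun a => (continuous_mul_of_continuousAt_uncurry hφ hk a).aestronglyMeasurable)
    ((continuous_mul_of_continuousAt_uncurry hφ hk a₀).integrable_of_hasCompactSupport
      hφc.mul_right)
    (continuous_mul_of_continuousAt_uncurry hφ hk' a₀).aestronglyMeasurable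
    (ae_of_all _ h_bound) ((hφ.integrable_of_hasCompactSupport hφc).norm.mul_const C)
    (ae_of_all _ fun p a _ => h_diff p a)).2

end ParametricIntegral

noncomputable section EarthquakeDensity

/-- The density of the Liouville measure pulled back by the elementary earthquake `E^a`,
up to the factor `2`. -/
def earthquakeDensity (a : ℝ) (p : ℝ × ℝ) : ℝ :=
  exp a / (exp a * p.1 - p.2) ^ 2

def earthquakeDensityDeriv (a : ℝ) (p : ℝ × ℝ) : ℝ :=
  exp a * (-(exp a * p.1) - p.2) / (exp a * p.1 - p.2) ^ 3

theorem exp_mul_sub_pos {p : ℝ × ℝ} (hp : 0 < p.1 ∧ p.2 < 0) (a : ℝ) :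
    0 < exp a * p.1 - p.2 := by
  linarith [mul_pos (exp_pos a) hp.1, hp.2]

theorem hasDerivAt_earthquakeDensity {p : ℝ × ℝ} {a : ℝ} (h : exp a * p.1 - p.2 ≠ 0) :
    HasDerivAt (earthquakeDensity · p) (earthquakeDensityDeriv a p) a := by
  have hden : HasDerivAt (fun b => (exp b * p.1 - p.2) ^ 2)
      (2 * (exp a * p.1 - p.2) * (exp a * p.1)) a := by
    simpa using (((hasDerivAt_exp a).mul_const p.1).sub_const p.2).fun_pow 2
  refine ((hasDerivAt_exp a).div hden (pow_ne_zero 2 h)).congr_deriv ?_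
  rw [earthquakeDensityDeriv]
  field_simp
  ring

theorem continuousAt_earthquakeDensity {p : ℝ × ℝ} {a : ℝ} (h : exp a * p.1 - p.2 ≠ 0) :
    ContinuousAt (uncurry earthquakeDensity) (a, p) := by
  unfold earthquakeDensity
  fun_prop (disch := exact pow_ne_zero _ h)

theorem continuousAt_earthquakeDensityDeriv {p : ℝ × ℝ} {a : ℝ} (h : exp a * p.1 - p.2 ≠ 0) :
    ContinuousAt (uncurry earthquakeDensityDeriv) (a, p) := by
  unfold earthquakeDensityDeriv
  fun_prop (disch := exact pow_ne_zero _ h)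

theorem earthquakeDensityDeriv_zero (p : ℝ × ℝ) :
    earthquakeDensityDeriv 0 p = -(p.1 + p.2) / (p.1 - p.2) ^ 3 := by
  simp only [earthquakeDensityDeriv, exp_zero, one_mul]
  ring

end EarthquakeDensity

/-- Let `φ : ℝ² → ℝ` be continuous with compact support contained in the open set
`{(x,y) : 0 < x ∧ y < 0}`.  Define `F a = ∫ φ(x,y) · e^a/(e^a·x − y)² d(x,y)`.  Then `F` is
differentiable at `a = 0` with `F'(0) = ∫ φ(x,y) · (−(x+y))/(x−y)³ d(x,y)`. -/
theorem liouville_elementary_earthquake_deriv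
    (φ : ℝ × ℝ → ℝ) (hφ_cont : Continuous φ) (hφ_supp : HasCompactSupport φ)
    (hφ_set : tsupport φ ⊆ {p : ℝ × ℝ | 0 < p.1 ∧ p.2 < 0})
    (F : ℝ → ℝ)
    (hF : ∀ a : ℝ, F a = ∫ p : ℝ × ℝ, φ p * (Real.exp a / (Real.exp a * p.1 - p.2) ^ 2)) :
    HasDerivAt F (∫ p : ℝ × ℝ, φ p * (-(p.1 + p.2) / (p.1 - p.2) ^ 3)) 0 := by
  have hden : ∀ a, ∀ p ∈ tsupport φ, exp a * p.1 - p.2 ≠ 0 :=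
    fun a p hp => (exp_mul_sub_pos (hφ_set hp) a).ne'
  have hF' : F = fun a => ∫ p, φ p * earthquakeDensity a p := funext hF
  simp_rw [hF', ← earthquakeDensityDeriv_zero]
  exact hasDerivAt_integral_mul_of_hasCompactSupport hφ_cont hφ_supp
    (fun a p hp => continuousAt_earthquakeDensity (hden a p hp))
    (fun a p hp => continuousAt_earthquakeDensityDeriv (hden a p hp))
    (fun a p hp => hasDerivAt_earthquakeDensity (hden a p hp)) 0
end

section
/- Let p, q, r, s ∈ ℝ with p·s − q·r = 1, and let φ : ℝ² → ℝ be continuous with compact support contained in {(x,y) ∈ ℝ² : x ≠ y}; assume moreover that if r ≠ 0 then the support of φ is disjoint from the two lines {x = p/r} and {y = p/r}. Define ψ : ℝ² → ℝ by ψ(x,y) = φ((p·x+q)/(r·x+s), (p·y+q)/(r·y+s)) whenever r·x+s ≠ 0 and r·y+s ≠ 0, and ψ(x,y) = 0 otherwise. Then ∫_{ℝ²} ψ(x,y)/(x−y)² d(x,y) = ∫_{ℝ²} φ(x,y)/(x−y)² d(x,y). (Invariance of the Liouville measure under Möbius transformations acting diagonally on pairs of boundary points.) -/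
/-! The Möbius map `m x = (p x + q) / (r x + s)` has derivative `(r x + s)⁻²` and satisfies
`m x - m y = (x - y) / ((r x + s) (r y + s))`, so the Jacobian `m' x * m' y` of the diagonal
action is exactly the factor by which `(x - y)⁻²` changes. Change of variables on
`{r x + s ≠ 0}²`, where `m` is injective, gives the identity: the image of that set misses only
the lines `w = p / r` through the pole of the inverse map `(s, -q; -r, p)`, a null set. -/

open MeasureTheory Set

theorem subsingleton_setOf_mul_add_eq_zero {a b : ℝ} (hab : a ≠ 0 ∨ b ≠ 0) :
    {x : ℝ | a * x + b = 0}.Subsingleton := by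
  intro x hx y hy
  rcases eq_or_ne a 0 with rfl | ha
  · simp_all
  · exact mul_left_cancel₀ ha (add_right_cancel (hx.trans hy.symm))

theorem integral_image_prodMap_eq_integral_abs_deriv_mul_smul
    {E : Type*} [NormedAddCommGroup E] [NormedSpace ℝ E] {f g f' g' : ℝ → ℝ} {s t : Set ℝ}
    (hs : MeasurableSet s) (ht : MeasurableSet t)
    (hf : ∀ x ∈ s, HasDerivWithinAt f (f' x) s x) (hg : ∀ y ∈ t, HasDerivWithinAt g (g' y) t y)
    (hf_inj : InjOn f s) (hg_inj : InjOn g t) (F : ℝ × ℝ → E) :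
    ∫ w in (f '' s) ×ˢ (g '' t), F w =
      ∫ v in s ×ˢ t, |f' v.1 * g' v.2| • F (f v.1, g v.2) := by
  have hderiv : ∀ v ∈ s ×ˢ t, HasFDerivWithinAt (Prod.map f g)
      ((ContinuousLinearMap.smulRight 1 (f' v.1)).prodMap
        (ContinuousLinearMap.smulRight 1 (g' v.2))) (s ×ˢ t) v := fun v hv ↦
    .prodMap v ((hf v.1 hv.1).hasFDerivWithinAt.mono (fst_image_prod_subset s t))
      ((hg v.2 hv.2).hasFDerivWithinAt.mono (snd_image_prod_subset s t))
  rw [← prodMap_image_prod, integral_image_eq_integral_abs_det_fderiv_smul volume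
    (hs.prod ht) hderiv (hf_inj.prodMap hg_inj)]
  congr! 3 with v
  rw [ContinuousLinearMap.det, ContinuousLinearMap.coe_prodMap, LinearMap.det_prodMap,
    ← ContinuousLinearMap.det, ← ContinuousLinearMap.det, ContinuousLinearMap.det_smulRight,
    ContinuousLinearMap.det_smulRight]
  simp

noncomputable def moebius (p q r s x : ℝ) : ℝ := (p * x + q) / (r * x + s)

section

variable {p q r s : ℝ}

theorem hasDerivAt_moebius (hdet : p * s - q * r = 1) {x : ℝ} (hx : r * x + s ≠ 0) :
    HasDerivAt (moebius p q r s) ((r * x + s) ^ 2)⁻¹ x := by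
  have hnum : HasDerivAt (fun x ↦ p * x + q) p x := by
    simpa using ((hasDerivAt_id x).const_mul p).add_const q
  have hden : HasDerivAt (fun x ↦ r * x + s) r x := by
    simpa using ((hasDerivAt_id x).const_mul r).add_const s
  have h := hnum.div hden hx
  rwa [show p * (r * x + s) - (p * x + q) * r = 1 by linear_combination hdet, one_div] at h

theorem moebius_sub_moebius (hdet : p * s - q * r = 1) {x y : ℝ} (hx : r * x + s ≠ 0)
    (hy : r * y + s ≠ 0) :
    moebius p q r s x - moebius p q r s y = (x - y) / ((r * x + s) * (r * y + s)) := by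
  rw [moebius, moebius, div_sub_div _ _ hx hy]
  congr 1
  linear_combination (x - y) * hdet

theorem neg_mul_moebius_add (hdet : p * s - q * r = 1) {x : ℝ} (hx : r * x + s ≠ 0) :
    -r * moebius p q r s x + p = (r * x + s)⁻¹ := by
  rw [moebius]
  field_simp
  linear_combination hdet

theorem moebius_adjugate_moebius (hdet : p * s - q * r = 1) {x : ℝ} (hx : r * x + s ≠ 0) :
    moebius s (-q) (-r) p (moebius p q r s x) = x := by
  have h := neg_mul_moebius_add hdet hx
  rw [moebius, h, div_eq_iff (inv_ne_zero hx), moebius, div_eq_mul_inv]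
  linear_combination x * (r * x + s)⁻¹ * hdet + q * inv_mul_cancel₀ hx

theorem injOn_moebius (hdet : p * s - q * r = 1) : InjOn (moebius p q r s) {x | r * x + s ≠ 0} :=
  LeftInvOn.injOn fun _ hx ↦ moebius_adjugate_moebius hdet hx

theorem image_moebius (hdet : p * s - q * r = 1) :
    moebius p q r s '' {x | r * x + s ≠ 0} = {w | -r * w + p ≠ 0} := by
  have hdet' : s * p - -q * -r = 1 := by linear_combination hdet
  refine Subset.antisymm ?_ fun w hw ↦ ⟨moebius s (-q) (-r) p w, ?_, ?_⟩
  · rintro _ ⟨x, hx, rfl⟩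
    exact (neg_mul_moebius_add hdet hx).trans_ne (inv_ne_zero hx)
  · have h := neg_mul_moebius_add hdet' hw
    rw [neg_neg] at h
    exact h.trans_ne (inv_ne_zero hw)
  · simpa only [neg_neg] using moebius_adjugate_moebius hdet' hw

theorem moebius_image_ae_eq_univ (hdet : p * s - q * r = 1) :
    moebius p q r s '' {x | r * x + s ≠ 0} =ᵐ[volume] univ := by
  have hpole : -r ≠ 0 ∨ p ≠ 0 := by
    by_contra! h
    obtain ⟨hr, rfl⟩ := h
    simp_all
  rw [ae_eq_univ, image_moebius hdet]
  simpa only [compl_ofPred, not_not] using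
    (subsingleton_setOf_mul_add_eq_zero hpole).measure_zero volume

theorem inv_sq_mul_inv_sq_div_sq_moebius_sub (hdet : p * s - q * r = 1) {x y : ℝ}
    (hx : r * x + s ≠ 0) (hy : r * y + s ≠ 0) :
    ((r * x + s) ^ 2)⁻¹ * ((r * y + s) ^ 2)⁻¹ / (moebius p q r s x - moebius p q r s y) ^ 2 =
      ((x - y) ^ 2)⁻¹ := by
  rw [moebius_sub_moebius hdet hx hy, div_pow, div_div_eq_mul_div, mul_pow]
  field_simp

end

theorem liouville_measure_moebius_invariant_general
    (p q r s : ℝ) (hdet : p * s - q * r = 1)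
    (φ : ℝ × ℝ → ℝ)
    (ψ : ℝ × ℝ → ℝ)
    (hψ : ∀ v : ℝ × ℝ, ψ v =
      if r * v.1 + s ≠ 0 ∧ r * v.2 + s ≠ 0 then
        φ ((p * v.1 + q) / (r * v.1 + s), (p * v.2 + q) / (r * v.2 + s))
      else 0) :
    ∫ v : ℝ × ℝ, ψ v / (v.1 - v.2) ^ 2 = ∫ v : ℝ × ℝ, φ v / (v.1 - v.2) ^ 2 := by
  set m := moebius p q r s
  set S : Set ℝ := {x | r * x + s ≠ 0}
  have hS : MeasurableSet S := (isOpen_ne_fun (by fun_prop) continuous_const).measurableSet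
  have hψ' : ∀ v, ψ v = if v ∈ S ×ˢ S then φ (m v.1, m v.2) else 0 := hψ
  have hfull : (m '' S) ×ˢ (m '' S) =ᵐ[volume] (univ : Set (ℝ × ℝ)) := by
    rw [← univ_prod_univ, Measure.volume_eq_prod]
    exact Measure.set_prod_ae_eq (moebius_image_ae_eq_univ hdet) (moebius_image_ae_eq_univ hdet)
  calc ∫ v, ψ v / (v.1 - v.2) ^ 2 = ∫ v in S ×ˢ S, ψ v / (v.1 - v.2) ^ 2 :=
        (setIntegral_eq_integral_of_forall_compl_eq_zero fun v hv ↦ by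
          rw [hψ', if_neg hv, zero_div]).symm
    _ = ∫ v in S ×ˢ S, |((r * v.1 + s) ^ 2)⁻¹ * ((r * v.2 + s) ^ 2)⁻¹| •
          (φ (m v.1, m v.2) / (m v.1 - m v.2) ^ 2) := by
        refine setIntegral_congr_fun (hS.prod hS) fun v hv ↦ ?_
        rw [hψ', if_pos hv, smul_eq_mul, abs_of_nonneg (by positivity), div_eq_mul_inv,
          div_eq_mul_inv, ← inv_sq_mul_inv_sq_div_sq_moebius_sub hdet hv.1 hv.2]
        ring
    _ = ∫ w in (m '' S) ×ˢ (m '' S), φ w / (w.1 - w.2) ^ 2 :=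
        (integral_image_prodMap_eq_integral_abs_deriv_mul_smul hS hS
          (fun x hx ↦ (hasDerivAt_moebius hdet hx).hasDerivWithinAt)
          (fun x hx ↦ (hasDerivAt_moebius hdet hx).hasDerivWithinAt)
          (injOn_moebius hdet) (injOn_moebius hdet) fun w ↦ φ w / (w.1 - w.2) ^ 2).symm
    _ = ∫ w, φ w / (w.1 - w.2) ^ 2 := by rw [setIntegral_congr_set hfull, setIntegral_univ]

/-- invariance of the Liouville measure `dx·dy/(x−y)²` under Möbius transformations
acting diagonally on pairs of boundary points. -/
theorem liouville_measure_moebius_invariant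
    (p q r s : ℝ) (hdet : p * s - q * r = 1)
    (φ : ℝ × ℝ → ℝ) (hφ_cont : Continuous φ) (hφ_supp : HasCompactSupport φ)
    (hφ_diag : tsupport φ ⊆ {v : ℝ × ℝ | v.1 ≠ v.2})
    (hφ_pole : r ≠ 0 → ∀ v ∈ tsupport φ, v.1 ≠ p / r ∧ v.2 ≠ p / r)
    (ψ : ℝ × ℝ → ℝ)
    (hψ : ∀ v : ℝ × ℝ, ψ v =
      if r * v.1 + s ≠ 0 ∧ r * v.2 + s ≠ 0 then
        φ ((p * v.1 + q) / (r * v.1 + s), (p * v.2 + q) / (r * v.2 + s))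
      else 0) :
    ∫ v : ℝ × ℝ, ψ v / (v.1 - v.2) ^ 2 = ∫ v : ℝ × ℝ, φ v / (v.1 - v.2) ^ 2 :=
  liouville_measure_moebius_invariant_general p q r s hdet φ ψ hψ
end

section
/- Let a < c < b be real numbers, let ψ : ℝ → ℝ be continuous on [a, b], and set I = ∫_a^b ψ(x)·(2x−a−b)/(b−a) dx − ∫_a^c ψ(x)·(2x−a−c)/(c−a) dx − ∫_c^b ψ(x)·(2x−c−b)/(b−c) dx. Then |I| ≤ 2·((c−a)(b−c)/(b−a))·sup_{x ∈ [a,b]} |ψ(x) − ψ(c)|. -/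
/-!
Each edge weight `(2x - p - q) / (q - p)` has integral zero over its edge, so `I` does not change
when `ψ` is replaced by `ψ - ψ c`. Splitting the long edge at `c`, the weights combine on `[a, c]`
and on `[c, b]` into affine kernels of constant sign, vanishing at `a` and at `b` respectively and
each of total mass `(c - a)(b - c)/(b - a)`; bounding `|ψ - ψ c|` by its supremum against each
kernel gives the estimate.
-/

open intervalIntegral Set

theorem le_ciSup₂_of_bddAbove_image {α β : Type*} [ConditionallyCompleteLattice α] {f : β → α}
    {s : Set β} (H : BddAbove (f '' s)) {x : β} (hx : x ∈ s) : f x ≤ ⨆ y ∈ s, f y :=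
  le_ciSup₂ (f := fun y (_ : y ∈ s) => f y) (H.mono <| iUnion_subset fun y => by
    rintro _ ⟨hy, rfl⟩; exact mem_image_of_mem f hy) x hx

theorem integral_sub_left_endpoint (p q : ℝ) : ∫ x in p..q, (x - p) = (q - p) ^ 2 / 2 := by
  simp [integral_comp_sub_right (fun x => x)]

theorem integral_right_endpoint_sub (p q : ℝ) : ∫ x in p..q, (q - x) = (q - p) ^ 2 / 2 := by
  simp [integral_comp_sub_left (fun x => x)]

theorem abs_integral_mul_le_of_abs_le {φ g : ℝ → ℝ} {p q M : ℝ} (hpq : p ≤ q)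
    (hg : ContinuousOn g (Icc p q)) (hφM : ∀ x ∈ Icc p q, |φ x| ≤ M)
    (hg0 : ∀ x ∈ Icc p q, 0 ≤ g x) :
    |∫ x in p..q, φ x * g x| ≤ M * ∫ x in p..q, g x := by
  rw [← integral_const_mul, ← Real.norm_eq_abs]
  refine norm_integral_le_of_norm_le hpq (MeasureTheory.ae_of_all _ fun x hx => ?_)
    ((hg.intervalIntegrable_of_Icc (μ := MeasureTheory.volume) hpq).const_mul M)
  have hx : x ∈ Icc p q := Ioc_subset_Icc_self hx
  rw [Real.norm_eq_abs, abs_mul, abs_of_nonneg (hg0 x hx)]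
  exact mul_le_mul_of_nonneg_right (hφM x hx) (hg0 x hx)

noncomputable def edgeWeight (p q x : ℝ) : ℝ := (2 * x - p - q) / (q - p)

theorem continuous_edgeWeight (p q : ℝ) : Continuous (edgeWeight p q) := by
  unfold edgeWeight; fun_prop

theorem integral_edgeWeight (p q : ℝ) : ∫ x in p..q, edgeWeight p q x = 0 := by
  have h : ∀ x, 2 * x - p - q = (x - p) - (q - x) := fun x => by ring
  simp only [edgeWeight, h, integral_div]
  rw [integral_sub (Continuous.intervalIntegrable (by fun_prop) _ _)
    (Continuous.intervalIntegrable (by fun_prop) _ _), integral_sub_left_endpoint,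
    integral_right_endpoint_sub, sub_self, zero_div]

theorem edgeWeight_sub_edgeWeight_left {a b c : ℝ} (hac : a ≠ c) (hab : a ≠ b) (x : ℝ) :
    edgeWeight a c x - edgeWeight a b x = 2 * (b - c) / ((b - a) * (c - a)) * (x - a) := by
  have := sub_ne_zero.2 hac.symm; have := sub_ne_zero.2 hab.symm
  unfold edgeWeight; field_simp; ring

theorem edgeWeight_sub_edgeWeight_right {a b c : ℝ} (hcb : c ≠ b) (hab : a ≠ b) (x : ℝ) :
    edgeWeight a b x - edgeWeight c b x = 2 * (c - a) / ((b - a) * (b - c)) * (b - x) := by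
  have := sub_ne_zero.2 hcb.symm; have := sub_ne_zero.2 hab.symm
  unfold edgeWeight; field_simp; ring

theorem integral_sub_const_mul_edgeWeight {ψ : ℝ → ℝ} {p q : ℝ}
    (hψ : IntervalIntegrable (fun x => ψ x * edgeWeight p q x) MeasureTheory.volume p q) (k : ℝ) :
    ∫ x in p..q, (ψ x - k) * edgeWeight p q x = ∫ x in p..q, ψ x * edgeWeight p q x := by
  simp only [sub_mul]
  rw [integral_sub hψ ((continuous_edgeWeight p q).intervalIntegrable _ _ |>.const_mul k),
    integral_const_mul, integral_edgeWeight, mul_zero, sub_zero]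

/-- The quantity `I` of the ideal triangle with vertices `a, c, b, ∞`. -/
noncomputable def triangleDefect (a b c : ℝ) (ψ : ℝ → ℝ) : ℝ :=
  (∫ x in a..b, ψ x * edgeWeight a b x) - (∫ x in a..c, ψ x * edgeWeight a c x) -
    ∫ x in c..b, ψ x * edgeWeight c b x

section
variable {a b c : ℝ} {ψ : ℝ → ℝ}

theorem ContinuousOn.intervalIntegrable_mul_edgeWeight {p q : ℝ} (hψ : ContinuousOn ψ (Icc p q))
    (hpq : p ≤ q) (r s : ℝ) :
    IntervalIntegrable (fun x => ψ x * edgeWeight r s x) MeasureTheory.volume p q :=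
  (hψ.mul (continuous_edgeWeight r s).continuousOn).intervalIntegrable_of_Icc hpq

theorem triangleDefect_sub_const (hac : a ≤ c) (hcb : c ≤ b) (hψ : ContinuousOn ψ (Icc a b))
    (k : ℝ) : triangleDefect a b c (fun x => ψ x - k) = triangleDefect a b c ψ := by
  have hψac := hψ.mono (Icc_subset_Icc le_rfl hcb)
  have hψcb := hψ.mono (Icc_subset_Icc hac le_rfl)
  simp only [triangleDefect]
  rw [integral_sub_const_mul_edgeWeight (hψ.intervalIntegrable_mul_edgeWeight (hac.trans hcb) _ _),
    integral_sub_const_mul_edgeWeight (hψac.intervalIntegrable_mul_edgeWeight hac _ _),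
    integral_sub_const_mul_edgeWeight (hψcb.intervalIntegrable_mul_edgeWeight hcb _ _)]

theorem triangleDefect_eq (hac : a < c) (hcb : c < b) (hψ : ContinuousOn ψ (Icc a b)) :
    triangleDefect a b c ψ =
      2 * (c - a) / ((b - a) * (b - c)) * (∫ x in c..b, ψ x * (b - x)) -
        2 * (b - c) / ((b - a) * (c - a)) * ∫ x in a..c, ψ x * (x - a) := by
  have hab := hac.trans hcb
  have hψac := hψ.mono (Icc_subset_Icc le_rfl hcb.le)
  have hψcb := hψ.mono (Icc_subset_Icc hac.le le_rfl)
  have hleft : (∫ x in a..c, ψ x * edgeWeight a c x) - ∫ x in a..c, ψ x * edgeWeight a b x =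
      2 * (b - c) / ((b - a) * (c - a)) * ∫ x in a..c, ψ x * (x - a) := by
    rw [← integral_sub (hψac.intervalIntegrable_mul_edgeWeight hac.le _ _)
      (hψac.intervalIntegrable_mul_edgeWeight hac.le _ _), ← integral_const_mul]
    congr 1 with x
    rw [← mul_sub, edgeWeight_sub_edgeWeight_left hac.ne hab.ne]; ring
  have hright : (∫ x in c..b, ψ x * edgeWeight a b x) - ∫ x in c..b, ψ x * edgeWeight c b x =
      2 * (c - a) / ((b - a) * (b - c)) * ∫ x in c..b, ψ x * (b - x) := by
    rw [← integral_sub (hψcb.intervalIntegrable_mul_edgeWeight hcb.le _ _)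
      (hψcb.intervalIntegrable_mul_edgeWeight hcb.le _ _), ← integral_const_mul]
    congr 1 with x
    rw [← mul_sub, edgeWeight_sub_edgeWeight_right hcb.ne hab.ne]; ring
  rw [triangleDefect, ← integral_add_adjacent_intervals
    (hψac.intervalIntegrable_mul_edgeWeight hac.le _ _)
    (hψcb.intervalIntegrable_mul_edgeWeight hcb.le _ _), ← hleft, ← hright]
  ring

theorem abs_triangleDefect_le {M : ℝ} (hac : a < c) (hcb : c < b)
    (hψ : ContinuousOn ψ (Icc a b)) (hψM : ∀ x ∈ Icc a b, |ψ x| ≤ M) :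
    |triangleDefect a b c ψ| ≤ 2 * ((c - a) * (b - c) / (b - a)) * M := by
  have hab := hac.trans hcb
  have hleft : |∫ x in a..c, ψ x * (x - a)| ≤ M * ((c - a) ^ 2 / 2) := by
    rw [← integral_sub_left_endpoint]
    exact abs_integral_mul_le_of_abs_le hac.le (by fun_prop)
      (fun x hx => hψM x ⟨hx.1, hx.2.trans hcb.le⟩) fun x hx => sub_nonneg.2 hx.1
  have hright : |∫ x in c..b, ψ x * (b - x)| ≤ M * ((b - c) ^ 2 / 2) := by
    rw [← integral_right_endpoint_sub]
    exact abs_integral_mul_le_of_abs_le hcb.le (by fun_prop)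
      (fun x hx => hψM x ⟨hac.le.trans hx.1, hx.2⟩) fun x hx => sub_nonneg.2 hx.2
  have hα : 0 ≤ 2 * (c - a) / ((b - a) * (b - c)) := by
    apply div_nonneg <;> nlinarith
  have hβ : 0 ≤ 2 * (b - c) / ((b - a) * (c - a)) := by
    apply div_nonneg <;> nlinarith
  set α := 2 * (c - a) / ((b - a) * (b - c))
  set β := 2 * (b - c) / ((b - a) * (c - a))
  rw [triangleDefect_eq hac hcb hψ]
  calc |α * (∫ x in c..b, ψ x * (b - x)) - β * ∫ x in a..c, ψ x * (x - a)|
      ≤ |α * (∫ x in c..b, ψ x * (b - x))| + |β * ∫ x in a..c, ψ x * (x - a)| := abs_sub _ _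
    _ = α * |∫ x in c..b, ψ x * (b - x)| + β * |∫ x in a..c, ψ x * (x - a)| := by
        rw [abs_mul, abs_mul, abs_of_nonneg hα, abs_of_nonneg hβ]
    _ ≤ α * (M * ((b - c) ^ 2 / 2)) + β * (M * ((c - a) ^ 2 / 2)) := by gcongr
    _ = 2 * ((c - a) * (b - c) / (b - a)) * M := by
        simp only [α, β]
        field_simp [(sub_pos.2 hac).ne', (sub_pos.2 hcb).ne', (sub_pos.2 hab).ne']
        ring

end

/-- the fundamental integral estimate: the triangle contribution `I` is bounded by
`2·((c−a)(b−c)/(b−a))` times the oscillation of `ψ` around its value at `c` on `[a,b]`. -/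
theorem triangle_integral_oscillation_bound
    (a b c : ℝ) (hac : a < c) (hcb : c < b)
    (ψ : ℝ → ℝ) (hψ : ContinuousOn ψ (Set.Icc a b))
    (I : ℝ)
    (hI : I = (∫ x in a..b, ψ x * ((2 * x - a - b) / (b - a))) -
      (∫ x in a..c, ψ x * ((2 * x - a - c) / (c - a))) -
      (∫ x in c..b, ψ x * ((2 * x - c - b) / (b - c)))) :
    |I| ≤ 2 * ((c - a) * (b - c) / (b - a)) * (⨆ x ∈ Set.Icc a b, |ψ x - ψ c|) := by
  have hI' : I = triangleDefect a b c ψ := hI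
  have hψc : ContinuousOn (fun x => ψ x - ψ c) (Icc a b) := hψ.sub continuousOn_const
  have hosc : ∀ x ∈ Icc a b, |ψ x - ψ c| ≤ ⨆ y ∈ Icc a b, |ψ y - ψ c| := fun x hx =>
    le_ciSup₂_of_bddAbove_image (isCompact_Icc.image_of_continuousOn hψc.abs).bddAbove hx
  rw [hI', ← triangleDefect_sub_const hac.le hcb.le hψ (ψ c)]
  exact abs_triangleDefect_le hac hcb hψc hosc
end

section
/- Let a < c < b be real numbers, let ν ∈ (0, 1], H ≥ 0, and let ψ : ℝ → ℝ be continuous on [a, b] with |ψ(x) − ψ(c)| ≤ H·|x − c|^ν for all x ∈ [a, b]. Set I = ∫_a^b ψ(x)·(2x−a−b)/(b−a) dx − ∫_a^c ψ(x)·(2x−a−c)/(c−a) dx − ∫_c^b ψ(x)·(2x−c−b)/(b−c) dx. Then |I| ≤ 2·H·((c−a)(b−c)/(b−a))·(b−a)^ν. -/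
/-!
Each weight `(2x - p - q)/(q - p)` has mean zero on `[p, q]`, so `ψ` may be replaced by
`ψ - ψ c`, which is bounded by `H (b - a)^ν` on `[a, b]`. After splitting the first integral
at `c`, `I` is the integral of `ψ - ψ c` against a kernel that is linear on `[a, c]` and on
`[c, b]` and vanishes at `a` and `b`; its `L¹` norm is `2 (c - a)(b - c)/(b - a)`.
-/

open intervalIntegral MeasureTheory Set

lemma integral_two_mul_sub_sub_div (p q r : ℝ) : ∫ x in p..q, (2 * x - p - q) / r = 0 := by
  simp only [intervalIntegral.integral_div, sub_sub]
  rw [integral_sub (intervalIntegrable_id.const_mul 2) intervalIntegrable_const,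
    intervalIntegral.integral_const_mul, integral_id, intervalIntegral.integral_const, smul_eq_mul]
  ring

lemma integral_abs_mul_sub_left {p q : ℝ} (hpq : p ≤ q) (s : ℝ) :
    ∫ x in p..q, |s * (x - p)| = |s| * (q - p) ^ 2 / 2 := by
  have : EqOn (fun x => |s * (x - p)|) (fun x => |s| * (x - p)) (uIcc p q) := by
    intro x hx
    rw [uIcc_of_le hpq] at hx
    simp only [abs_mul, abs_of_nonneg (sub_nonneg.2 hx.1)]
  rw [integral_congr this, intervalIntegral.integral_const_mul,
    intervalIntegral.integral_comp_sub_right (fun x => x), sub_self, integral_id]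
  ring

lemma integral_abs_mul_sub_right {p q : ℝ} (hpq : p ≤ q) (s : ℝ) :
    ∫ x in p..q, |s * (q - x)| = |s| * (q - p) ^ 2 / 2 := by
  have h := intervalIntegral.integral_comp_sub_left (fun x => |s * (x - p)|) (p + q) (a := p) (b := q)
  simp only [add_sub_cancel_right, add_sub_cancel_left] at h
  rw [← integral_abs_mul_sub_left hpq, ← h]
  congr 1; ext x; ring_nf

lemma integral_sub_const_mul_of_integral_eq_zero {f w : ℝ → ℝ} {p q : ℝ}
    (hfw : IntervalIntegrable (fun x => f x * w x) volume p q)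
    (hw : IntervalIntegrable w volume p q) (hw0 : ∫ x in p..q, w x = 0) (K : ℝ) :
    ∫ x in p..q, (f x - K) * w x = ∫ x in p..q, f x * w x := by
  simp only [sub_mul]
  rw [integral_sub hfw (hw.const_mul K), intervalIntegral.integral_const_mul, hw0, mul_zero,
    sub_zero]

lemma abs_integral_mul_le_mul_integral_abs {f ℓ : ℝ → ℝ} {p q M : ℝ} (hpq : p ≤ q)
    (hf : ∀ x ∈ Ioc p q, |f x| ≤ M) (hℓ : IntervalIntegrable ℓ volume p q) :
    |∫ x in p..q, f x * ℓ x| ≤ M * ∫ x in p..q, |ℓ x| := by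
  rw [← Real.norm_eq_abs, ← intervalIntegral.integral_const_mul]
  refine norm_integral_le_of_norm_le hpq (ae_of_all _ fun x hx => ?_) (hℓ.abs.const_mul M)
  rw [Real.norm_eq_abs, abs_mul]
  exact mul_le_mul_of_nonneg_right (hf x hx) (abs_nonneg _)

lemma ContinuousOn.intervalIntegrable_mul_of_mem_Icc {f w : ℝ → ℝ} {a b p q : ℝ}
    (hf : ContinuousOn f (Icc a b)) (hw : Continuous w) (hp : p ∈ Icc a b) (hq : q ∈ Icc a b) :
    IntervalIntegrable (fun x => f x * w x) volume p q :=
  ((hf.mono (uIcc_subset_Icc hp hq)).mul hw.continuousOn).intervalIntegrable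

section Triangle

variable {f : ℝ → ℝ} {a b c : ℝ}

lemma triangle_integral_sub_const (hf : ContinuousOn f (Icc a b)) (hac : a ≤ c) (hcb : c ≤ b)
    (K : ℝ) :
    ((∫ x in a..b, (f x - K) * ((2 * x - a - b) / (b - a))) -
      (∫ x in a..c, (f x - K) * ((2 * x - a - c) / (c - a))) -
      (∫ x in c..b, (f x - K) * ((2 * x - c - b) / (b - c)))) =
    (∫ x in a..b, f x * ((2 * x - a - b) / (b - a))) -
      (∫ x in a..c, f x * ((2 * x - a - c) / (c - a))) -
      (∫ x in c..b, f x * ((2 * x - c - b) / (b - c))) := by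
  have ha : a ∈ Icc a b := left_mem_Icc.2 (hac.trans hcb)
  have hb : b ∈ Icc a b := right_mem_Icc.2 (hac.trans hcb)
  have hc : c ∈ Icc a b := ⟨hac, hcb⟩
  have key : ∀ p ∈ Icc a b, ∀ q ∈ Icc a b, ∀ r : ℝ,
      ∫ x in p..q, (f x - K) * ((2 * x - p - q) / r) = ∫ x in p..q, f x * ((2 * x - p - q) / r) :=
    fun p hp q hq r => integral_sub_const_mul_of_integral_eq_zero
      (hf.intervalIntegrable_mul_of_mem_Icc (by fun_prop) hp hq)
      ((by fun_prop : Continuous fun x : ℝ => (2 * x - p - q) / r).intervalIntegrable _ _)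
      (integral_two_mul_sub_sub_div p q r) K
  rw [key a ha b hb, key a ha c hc, key c hc b hb]

lemma triangle_integral_eq_add (hf : ContinuousOn f (Icc a b)) (hac : a < c) (hcb : c < b) :
    (∫ x in a..b, f x * ((2 * x - a - b) / (b - a))) -
      (∫ x in a..c, f x * ((2 * x - a - c) / (c - a))) -
      (∫ x in c..b, f x * ((2 * x - c - b) / (b - c))) =
    (∫ x in a..c, f x * ((2 / (b - a) - 2 / (c - a)) * (x - a))) +
      ∫ x in c..b, f x * ((2 / (b - c) - 2 / (b - a)) * (b - x)) := by
  have ha : a ∈ Icc a b := left_mem_Icc.2 (hac.trans hcb).le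
  have hb : b ∈ Icc a b := right_mem_Icc.2 (hac.trans hcb).le
  have hc : c ∈ Icc a b := ⟨hac.le, hcb.le⟩
  have hba : b - a ≠ 0 := by linarith
  have hca : c - a ≠ 0 := by linarith
  have hbc : b - c ≠ 0 := by linarith
  have hfw : ∀ {w : ℝ → ℝ}, Continuous w → ∀ p ∈ Icc a b, ∀ q ∈ Icc a b,
      IntervalIntegrable (fun x => f x * w x) volume p q :=
    fun hw _ hp _ hq => hf.intervalIntegrable_mul_of_mem_Icc hw hp hq
  -- On `[p, q]` the weight `(2x - p - q)/(q - p)` equals `-1` at `p` and `1` at `q`.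
  have left : ∫ x in a..c, f x * ((2 / (b - a) - 2 / (c - a)) * (x - a)) =
      (∫ x in a..c, f x * ((2 * x - a - b) / (b - a))) -
        ∫ x in a..c, f x * ((2 * x - a - c) / (c - a)) := by
    rw [← integral_sub (hfw (by fun_prop) a ha c hc) (hfw (by fun_prop) a ha c hc)]
    congr 1; ext x; field_simp; ring
  have right : ∫ x in c..b, f x * ((2 / (b - c) - 2 / (b - a)) * (b - x)) =
      (∫ x in c..b, f x * ((2 * x - a - b) / (b - a))) -
        ∫ x in c..b, f x * ((2 * x - c - b) / (b - c)) := by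
    rw [← integral_sub (hfw (by fun_prop) c hc b hb) (hfw (by fun_prop) c hc b hb)]
    congr 1; ext x; field_simp; ring
  rw [left, right, ← integral_add_adjacent_intervals (hfw (by fun_prop) a ha c hc)
    (hfw (by fun_prop) c hc b hb)]
  ring

lemma integral_abs_triangle_kernel (hac : a < c) (hcb : c < b) :
    (∫ x in a..c, |(2 / (b - a) - 2 / (c - a)) * (x - a)|) +
      ∫ x in c..b, |(2 / (b - c) - 2 / (b - a)) * (b - x)| = 2 * ((c - a) * (b - c) / (b - a)) := by
  have hca : 0 < c - a := by linarith
  have hbc : 0 < b - c := by linarith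
  have hba : 0 < b - a := by linarith
  have hs₁ : 2 / (b - a) - 2 / (c - a) ≤ 0 :=
    sub_nonpos.2 (div_le_div_of_nonneg_left zero_le_two hca (by linarith))
  have hs₂ : 0 ≤ 2 / (b - c) - 2 / (b - a) :=
    sub_nonneg.2 (div_le_div_of_nonneg_left zero_le_two hbc (by linarith))
  rw [integral_abs_mul_sub_left hac.le, integral_abs_mul_sub_right hcb.le, abs_of_nonpos hs₁,
    abs_of_nonneg hs₂]
  field_simp
  ring

end Triangle

/-- the Hölder-continuity estimate for the triangle contribution `I`. -/
theorem triangle_integral_holder_bound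
    (a b c : ℝ) (hac : a < c) (hcb : c < b)
    (ν : ℝ) (hν : ν ∈ Set.Ioc (0 : ℝ) 1) (H : ℝ) (hH : 0 ≤ H)
    (ψ : ℝ → ℝ) (hψ : ContinuousOn ψ (Set.Icc a b))
    (hψH : ∀ x ∈ Set.Icc a b, |ψ x - ψ c| ≤ H * |x - c| ^ ν)
    (I : ℝ)
    (hI : I = (∫ x in a..b, ψ x * ((2 * x - a - b) / (b - a))) -
      (∫ x in a..c, ψ x * ((2 * x - a - c) / (c - a))) -
      (∫ x in c..b, ψ x * ((2 * x - c - b) / (b - c)))) :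
    |I| ≤ 2 * H * ((c - a) * (b - c) / (b - a)) * (b - a) ^ ν := by
  have hM : ∀ x ∈ Icc a b, |ψ x - ψ c| ≤ H * (b - a) ^ ν := fun x hx =>
    (hψH x hx).trans (mul_le_mul_of_nonneg_left (Real.rpow_le_rpow (abs_nonneg _)
      (abs_sub_le_iff.2 ⟨by linarith [hx.2], by linarith [hx.1]⟩) hν.1.le) hH)
  have hA := abs_integral_mul_le_mul_integral_abs hac.le
    (fun x hx => hM x ⟨hx.1.le, hx.2.trans hcb.le⟩)
    ((by fun_prop : Continuous fun x => (2 / (b - a) - 2 / (c - a)) * (x - a)).intervalIntegrable a c)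
  have hB := abs_integral_mul_le_mul_integral_abs hcb.le
    (fun x hx => hM x ⟨hac.le.trans hx.1.le, hx.2⟩)
    ((by fun_prop : Continuous fun x => (2 / (b - c) - 2 / (b - a)) * (b - x)).intervalIntegrable c b)
  rw [hI, ← triangle_integral_sub_const hψ hac.le hcb.le (ψ c),
    triangle_integral_eq_add (f := fun x => ψ x - ψ c) (hψ.sub continuousOn_const) hac hcb]
  calc _ ≤ _ := abs_add_le _ _
    _ ≤ _ := add_le_add hA hB
    _ = _ := by rw [← mul_add, integral_abs_triangle_kernel hac hcb]; ring
end

section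
/- For all real numbers a < b, the infimal hyperbolic distance D from i to the geodesic γ_{a,b} satisfies | D − |log((b−a)/2)| | ≤ |a + b|. -/
open scoped UpperHalfPlane

/-!
Put `c = (a + b) / 2` and `r = (b - a) / 2`. The horizontal translate `c + i` of `i` lies within
hyperbolic distance `|c|` of `i`. Seen from `c + i` the geodesic is at distance exactly `|log r|`:
on the semicircle `cosh d(c + i, z) = (1 + r²) / (2 Im z)`, which is smallest at the apex
`c + r i`. Since `infDist` is 1-Lipschitz, `|D - |log r|| ≤ |c| ≤ |a + b|`.
-/

namespace UpperHalfPlane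

open Real Metric

theorem dist_real_vadd_le (x : ℝ) (z : ℍ) : dist z (x +ᵥ z) ≤ |x| / z.im := by
  refine (dist_le_dist_coe_div_sqrt z (x +ᵥ z)).trans_eq ?_
  rw [coe_vadd, vadd_im, Real.sqrt_mul_self z.im_pos.le, Complex.dist_eq, sub_add_cancel_right,
    norm_neg, Complex.norm_real, Real.norm_eq_abs]

theorem cosh_dist_real_vadd_I_of_norm_sub_eq {x r : ℝ} {z : ℍ} (hz : ‖(z : ℂ) - x‖ = r) :
    cosh (dist (x +ᵥ I) z) = (1 + r ^ 2) / (2 * z.im) := by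
  have hre_im : (z.re - x) ^ 2 + z.im ^ 2 = r ^ 2 := by
    rw [← hz, Complex.sq_norm, Complex.normSq_apply]
    simp only [Complex.sub_re, Complex.sub_im, Complex.ofReal_re, Complex.ofReal_im, sub_zero,
      coe_re, coe_im]
    ring
  rw [cosh_dist', vadd_re, vadd_im, I_re, I_im, ← hre_im]
  ring

theorem infDist_real_vadd_I_semicircle (x : ℝ) {r : ℝ} (hr : 0 < r) :
    infDist (x +ᵥ I) {z : ℍ | ‖(z : ℂ) - x‖ = r} = |log r| := by
  set apex : ℍ := x +ᵥ mk (r * Complex.I) (by simpa using hr)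
  have h_apex : apex ∈ {z : ℍ | ‖(z : ℂ) - x‖ = r} := by
    simp [apex, coe_vadd, abs_of_pos hr]
  have h_dist_apex : dist (x +ᵥ I) apex = |log r| := by
    rw [dist_of_re_eq (by simp [apex]), Real.dist_eq]
    simp [apex]
  refine le_antisymm (h_dist_apex ▸ infDist_le_dist_of_mem h_apex)
    ((le_infDist ⟨apex, h_apex⟩).2 fun z (hz : ‖(z : ℂ) - x‖ = r) => ?_)
  have him : z.im ≤ r := by
    simpa [hz] using (le_abs_self _).trans (Complex.abs_im_le_norm ((z : ℂ) - x))
  rw [← abs_of_nonneg dist_nonneg, ← cosh_le_cosh, cosh_log hr,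
    cosh_dist_real_vadd_I_of_norm_sub_eq hz]
  calc (r + r⁻¹) / 2 = (1 + r ^ 2) / (2 * r) := by field_simp; ring
    _ ≤ (1 + r ^ 2) / (2 * z.im) := by gcongr

end UpperHalfPlane

/-- for `a < b`, the distance `D` from `i` to the geodesic `γ_{a,b}` satisfies
`|D − |log((b−a)/2)|| ≤ |a + b|`. -/
theorem dist_to_geodesic_estimate (a b : ℝ) (hab : a < b) :
    abs (Metric.infDist UpperHalfPlane.I
        {z : ℍ | ‖(z : ℂ) - (((a + b) / 2 : ℝ) : ℂ)‖ = (b - a) / 2} -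
      |Real.log ((b - a) / 2)|) ≤ |a + b| := by
  set S := {z : ℍ | ‖(z : ℂ) - (((a + b) / 2 : ℝ) : ℂ)‖ = (b - a) / 2}
  set i := UpperHalfPlane.I
  rw [← UpperHalfPlane.infDist_real_vadd_I_semicircle ((a + b) / 2) (by linarith),
    ← Real.dist_eq]
  calc dist (Metric.infDist i S) (Metric.infDist ((a + b) / 2 +ᵥ i) S)
      ≤ dist i ((a + b) / 2 +ᵥ i) := by
        simpa using (Metric.lipschitz_infDist_pt S).dist_le_mul i _
    _ ≤ |(a + b) / 2| / i.im := UpperHalfPlane.dist_real_vadd_le _ _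
    _ ≤ |a + b| := by
      rw [UpperHalfPlane.I_im, div_one, abs_div, abs_two]
      linarith [abs_nonneg (a + b)]
end

section
/- There exists a constant C ≥ 1 such that for all real numbers a < b with a·b ≥ −1 (i.e. the point i is not separated from ∞ by the geodesic γ_{a,b}), one has C^{-1}·e^{−D} ≤ arctan b − arctan a ≤ C·e^{−D}, where D is the infimal hyperbolic distance from i to γ_{a,b}. -/
open scoped UpperHalfPlane

/-!
Put `θ = arctan b - arctan a`, so that `sin θ = (b - a) / s` and `cos θ = (1 + a b) / s` with
`s = √(1 + a²) √(1 + b²)`. By Cauchy–Schwarz, `cosh (dist i z) ≥ s / (b - a)` on the semicircle, with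
equality at one point, so the distance `D` from `i` to `γ_{a,b}` satisfies `cosh D · sin θ = 1`.
When `cos θ ≥ 0`, i.e. `a b ≥ -1`, this gives `sinh D · sin θ = cos θ`, hence
`e^{-D} = (1 - cos θ) / sin θ = tan (θ / 2)`, and `θ / 2 ≤ tan (θ / 2) ≤ θ` since `θ ≤ π / 2`.
-/

open Real Metric

theorem Real.sin_arctan_sub_arctan (a b : ℝ) :
    sin (arctan b - arctan a) = (b - a) / (√(1 + a ^ 2) * √(1 + b ^ 2)) := by
  rw [sin_sub, sin_arctan, cos_arctan, sin_arctan, cos_arctan]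
  field_simp

theorem Real.cos_arctan_sub_arctan (a b : ℝ) :
    cos (arctan b - arctan a) = (1 + a * b) / (√(1 + a ^ 2) * √(1 + b ^ 2)) := by
  rw [cos_sub, sin_arctan, cos_arctan, sin_arctan, cos_arctan]
  field_simp

theorem Real.tan_half_mul_sin {θ : ℝ} (h : sin θ ≠ 0) : tan (θ / 2) * sin θ = 1 - cos θ := by
  obtain ⟨φ, rfl⟩ : ∃ φ, θ = 2 * φ := ⟨θ / 2, by ring⟩
  rw [sin_two_mul] at h ⊢
  have hcos : cos φ ≠ 0 := right_ne_zero_of_mul h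
  rw [mul_div_cancel_left₀ φ two_ne_zero, tan_eq_sin_div_cos, cos_two_mul]
  field_simp
  linear_combination 2 * sin_sq_add_cos_sq φ

theorem Real.exp_neg_eq_tan_half {D θ : ℝ} (hD : 0 ≤ D) (hsin : 0 < sin θ) (hcos : 0 ≤ cos θ)
    (h : cosh D * sin θ = 1) : exp (-D) = tan (θ / 2) := by
  have hsinh : sinh D * sin θ = cos θ := by
    have := sinh_nonneg_iff.2 hD
    rw [← sq_eq_sq₀ (by positivity) hcos]
    linear_combination (sin θ) ^ 2 * (cosh_sq D).symm + (cosh D * sin θ + 1) * h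
      - sin_sq_add_cos_sq θ
  refine mul_right_cancel₀ hsin.ne' ?_
  rw [tan_half_mul_sin hsin.ne', ← cosh_sub_sinh, sub_mul, h, hsinh]

theorem Real.tan_le_two_mul {x : ℝ} (h0 : 0 ≤ x) (h1 : x ≤ 1) : tan x ≤ 2 * x := by
  have hcos : 1 / 2 ≤ cos x := by nlinarith [one_sub_sq_div_two_le_cos (x := x)]
  rw [tan_eq_sin_div_cos, div_le_iff₀ (by linarith)]
  nlinarith [sin_le h0]

namespace UpperHalfPlane

theorem cosh_dist_I (z : ℍ) : cosh (dist I z) = (z.re ^ 2 + z.im ^ 2 + 1) / (2 * z.im) := by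
  rw [cosh_dist']
  simp only [I_re, I_im]
  ring_nf

def semicircle (a b : ℝ) : Set ℍ :=
  {z : ℍ | ‖(z : ℂ) - (((a + b) / 2 : ℝ) : ℂ)‖ = (b - a) / 2}

theorem mem_semicircle_iff {a b : ℝ} (hab : a ≤ b) {z : ℍ} :
    z ∈ semicircle a b ↔ (z.re - (a + b) / 2) ^ 2 + z.im ^ 2 = ((b - a) / 2) ^ 2 := by
  rw [semicircle, Set.mem_ofPred_eq, ← sq_eq_sq₀ (norm_nonneg _) (by linarith), Complex.sq_norm,
    Complex.normSq_apply]
  simp only [Complex.sub_re, Complex.sub_im, Complex.ofReal_re, Complex.ofReal_im, coe_re, coe_im,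
    sub_zero, ← sq]

theorem cosh_dist_I_ge_of_mem_semicircle {a b : ℝ} (hab : a < b) {z : ℍ}
    (hz : z ∈ semicircle a b) :
    √(1 + a ^ 2) * √(1 + b ^ 2) / (b - a) ≤ cosh (dist I z) := by
  rw [mem_semicircle_iff hab.le] at hz
  set s := √(1 + a ^ 2) * √(1 + b ^ 2)
  have hs : s ^ 2 = (1 + a ^ 2) * (1 + b ^ 2) := by
    rw [mul_pow, sq_sqrt (by positivity), sq_sqrt (by positivity)]
  have hba : 0 < b - a := by linarith
  -- Cauchy–Schwarz for `(2s, -(b² - a²))` and `(im z, re z - (a + b)/2)`, whose norms multiply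
  -- to `(b - a)(a² + b² + 2)/2`
  have lagrange : ((b - a) * (a ^ 2 + b ^ 2 + 2) / 2) ^ 2
      - (2 * s * z.im - (b - a) * (a + b) * (z.re - (a + b) / 2)) ^ 2
      = (2 * s * (z.re - (a + b) / 2) + (b - a) * (a + b) * z.im) ^ 2 := by
    linear_combination (-(4 * s ^ 2 + (a + b) ^ 2 * (b - a) ^ 2)) * hz + (-(b - a) ^ 2) * hs
  have hcs : 2 * s * z.im - (b - a) * (a + b) * (z.re - (a + b) / 2)
      ≤ (b - a) * (a ^ 2 + b ^ 2 + 2) / 2 :=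
    (abs_le_of_sq_le_sq' (by nlinarith [lagrange]) (by positivity)).2
  rw [cosh_dist_I, div_le_div_iff₀ hba (by positivity)]
  nlinarith [hcs]

theorem exists_mem_semicircle_cosh_dist_I_eq {a b : ℝ} (hab : a < b) :
    ∃ z ∈ semicircle a b, cosh (dist I z) = √(1 + a ^ 2) * √(1 + b ^ 2) / (b - a) := by
  set s := √(1 + a ^ 2) * √(1 + b ^ 2)
  have hs : s ^ 2 = (1 + a ^ 2) * (1 + b ^ 2) := by
    rw [mul_pow, sq_sqrt (by positivity), sq_sqrt (by positivity)]
  have hs0 : 0 < s := by positivity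
  clear_value s
  have hba : 0 < b - a := by linarith
  have hN : 0 < a ^ 2 + b ^ 2 + 2 := by positivity
  -- the equality case of the Cauchy–Schwarz inequality above
  let z : ℍ := ⟨⟨(a + b) * (1 + a * b) / (a ^ 2 + b ^ 2 + 2), (b - a) * s / (a ^ 2 + b ^ 2 + 2)⟩,
    div_pos (mul_pos hba hs0) hN⟩
  refine ⟨z, (mem_semicircle_iff hab.le).2 ?_, ?_⟩
  · simp only [z, re, im]
    field_simp
    linear_combination 4 * (b - a) ^ 2 * hs
  · rw [cosh_dist_I]
    simp only [z, re, im]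
    field_simp
    linear_combination ((b - a) ^ 2 - 2 * (a ^ 2 + b ^ 2 + 2)) * hs

theorem cosh_infDist_I_semicircle {a b : ℝ} (hab : a < b) :
    cosh (infDist I (semicircle a b)) = √(1 + a ^ 2) * √(1 + b ^ 2) / (b - a) := by
  obtain ⟨z, hz, hcosh⟩ := exists_mem_semicircle_cosh_dist_I_eq hab
  suffices infDist I (semicircle a b) = dist I z by rw [this, hcosh]
  refine le_antisymm (infDist_le_dist_of_mem hz) ((le_infDist ⟨z, hz⟩).2 fun w hw ↦ ?_)
  have := hcosh.trans_le (cosh_dist_I_ge_of_mem_semicircle hab hw)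
  rwa [cosh_le_cosh, abs_of_nonneg dist_nonneg, abs_of_nonneg dist_nonneg] at this

end UpperHalfPlane

open UpperHalfPlane

/-- there is a constant `C ≥ 1` such that for all `a < b` with `a·b ≥ −1`, the
visual length `arctan b − arctan a` is comparable to `e^{−D}`, where `D` is the hyperbolic
distance from `i` to the geodesic `γ_{a,b}`. -/
theorem visual_angle_comparable_exp_neg_dist :
    ∃ C : ℝ, 1 ≤ C ∧ ∀ a b : ℝ, a < b → a * b ≥ -1 →
      C⁻¹ * Real.exp (-(Metric.infDist UpperHalfPlane.I
          {z : ℍ | ‖(z : ℂ) - (((a + b) / 2 : ℝ) : ℂ)‖ = (b - a) / 2})) ≤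
        Real.arctan b - Real.arctan a ∧
      Real.arctan b - Real.arctan a ≤
        C * Real.exp (-(Metric.infDist UpperHalfPlane.I
          {z : ℍ | ‖(z : ℂ) - (((a + b) / 2 : ℝ) : ℂ)‖ = (b - a) / 2})) := by
  refine ⟨2, one_le_two, fun a b hab hab' ↦ ?_⟩
  change 2⁻¹ * exp (-infDist I (semicircle a b)) ≤ _ ∧ _ ≤ 2 * exp (-infDist I (semicircle a b))
  set θ := arctan b - arctan a
  have hs : 0 < √(1 + a ^ 2) * √(1 + b ^ 2) := by positivity
  have hsin : 0 < sin θ := by rw [sin_arctan_sub_arctan]; exact div_pos (by linarith) hs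
  have hcos : 0 ≤ cos θ := by rw [cos_arctan_sub_arctan]; exact div_nonneg (by linarith) hs.le
  have hθ_pos : 0 < θ := sub_pos.2 (arctan_strictMono hab)
  have hθ_le : θ ≤ π / 2 := by
    by_contra! h
    have : θ < π := by linarith [arctan_lt_pi_div_two b, neg_pi_div_two_lt_arctan a]
    exact hcos.not_gt (cos_neg_of_pi_div_two_lt_of_lt h (by linarith))
  have hexp : exp (-infDist I (semicircle a b)) = tan (θ / 2) := by
    refine exp_neg_eq_tan_half infDist_nonneg hsin hcos ?_
    rw [cosh_infDist_I_semicircle hab, sin_arctan_sub_arctan]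
    have : b - a ≠ 0 := sub_ne_zero.2 hab.ne'
    field_simp
  rw [hexp]
  have hlower := le_tan (x := θ / 2) (by linarith) (by linarith)
  have hupper := tan_le_two_mul (x := θ / 2) (by linarith) (by linarith [pi_le_four])
  constructor <;> linarith
end
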